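/- Let K be a finite extension of ℚ_p with ramification index e = e(K/ℚ_p). Then log(O_K^×) ⊆ {x ∈ K : |x|_p ≤ e/(ln(p)·e^1)}, i.e. the image of the unit group under the p-adic logarithm lies in the closed disc of radius e(K/ℚ_p)/(exp(1)·ln p). -/

import Mathlib

/-!
For `‖a‖ < 1` we have `‖a‖ ≤ ‖π‖ = exp (-c)` with `c = log p / e`. Since `‖n‖_p ≥ 1/n`, the
`n`-th term of the logarithm series has norm at most `n · exp (-c n)`, and `x ↦ x · exp (-c x)`
is bounded by `1 / (exp 1 · c)`. By the ultrametric inequality the same bound holds for the sum.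
-/

/-- The `p`-adic logarithm `log(1+a)`, given by the power series `∑_{n≥1} (-1)^{n+1} aⁿ/n`. -/
noncomputable def padicLogOneAdd {K : Type*} [NormedField K] (a : K) : K :=
  ∑' n : ℕ, ((-1 : K) ^ n / ((n : K) + 1)) * a ^ (n + 1)

open Real in
lemma Real.mul_exp_neg_mul_le {c : ℝ} (hc : 0 < c) (x : ℝ) :
    x * exp (-(c * x)) ≤ 1 / (exp 1 * c) := by
  rw [le_div_iff₀ (by positivity)]
  calc x * exp (-(c * x)) * (exp 1 * c) = c * x * exp (-(c * x)) * exp 1 := by ring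
    _ ≤ exp (-1) * exp 1 := by gcongr; exact mul_exp_neg_le_exp_neg_one _
    _ = 1 := by rw [← exp_add, neg_add_cancel, exp_zero]

lemma Padic.inv_le_norm_natCast {p : ℕ} [Fact p.Prime] {n : ℕ} (hn : n ≠ 0) :
    (n : ℝ)⁻¹ ≤ ‖(n : ℚ_[p])‖ := by
  have := (Fact.out : p.Prime).pos
  rw [Padic.norm_eq_zpow_neg_valuation (Nat.cast_ne_zero.mpr hn), Padic.valuation_natCast,
    zpow_neg, zpow_natCast]
  exact inv_anti₀ (by positivity)
    (mod_cast Nat.le_of_dvd (Nat.pos_of_ne_zero hn) pow_padicValNat_dvd)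

section

variable {K : Type*} [NormedField K]

lemma norm_padicLogOneAdd_term_le (hK : ∀ n : ℕ, n ≠ 0 → (n : ℝ)⁻¹ ≤ ‖(n : K)‖)
    (a : K) (n : ℕ) :
    ‖(-1 : K) ^ n / ((n : K) + 1) * a ^ (n + 1)‖ ≤ (n + 1) * ‖a‖ ^ (n + 1) := by
  have hn := hK (n + 1) n.succ_ne_zero
  push_cast at hn
  rw [norm_mul, norm_div, norm_pow, norm_neg, norm_one, one_pow, one_div, norm_pow]
  gcongr
  exact inv_le_of_inv_le₀ (by positivity) hn

open Real in
lemma norm_padicLogOneAdd_le [IsUltrametricDist K]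
    (hK : ∀ n : ℕ, n ≠ 0 → (n : ℝ)⁻¹ ≤ ‖(n : K)‖) {c : ℝ} (hc : 0 < c) {a : K}
    (ha : ‖a‖ ≤ exp (-c)) : ‖padicLogOneAdd a‖ ≤ 1 / (exp 1 * c) := by
  refine IsUltrametricDist.norm_tsum_le_of_forall_le fun n ↦ ?_
  calc _ ≤ (n + 1) * ‖a‖ ^ (n + 1) := norm_padicLogOneAdd_term_le hK a n
    _ ≤ (n + 1) * exp (-c) ^ (n + 1) := by gcongr
    _ = (n + 1) * exp (-(c * (n + 1))) := by rw [← exp_nat_mul]; push_cast; ring_nf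
    _ ≤ 1 / (exp 1 * c) := mul_exp_neg_mul_le hc _

end

/-- The ramification index `e` is encoded by a uniformizer `π` with `‖π‖ = p^{-1/e}`, of maximal
norm in the maximal ideal. Since the extended logarithm kills Teichmüller representatives,
`log(O_K^×) = log(1 + m_K)`, the image of `a ↦ log(1+a)` for `‖a‖ < 1`. -/
theorem padic_log_units_in_disc_general (p : ℕ) [hp : Fact p.Prime]
    (K : Type*) [NontriviallyNormedField K] [IsUltrametricDist K]
    [Algebra ℚ_[p] K]
    (hnorm : ∀ x : ℚ_[p], ‖algebraMap ℚ_[p] K x‖ = ‖x‖)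
    (e : ℕ) (he : 0 < e) (π : K)
    (hπ : ‖π‖ = (p : ℝ) ^ (-(1 / (e : ℝ))))
    (hmax : ∀ x : K, ‖x‖ < 1 → ‖x‖ ≤ ‖π‖) :
    (fun a => padicLogOneAdd a) '' {a : K | ‖a‖ < 1}
      ⊆ {x : K | ‖x‖ ≤ (e : ℝ) / (Real.exp 1 * Real.log p)} := by
  rintro _ ⟨a, ha, rfl⟩
  have hK : ∀ n : ℕ, n ≠ 0 → (n : ℝ)⁻¹ ≤ ‖(n : K)‖ := fun n hn ↦ by
    rw [← map_natCast (algebraMap ℚ_[p] K), hnorm]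
    exact Padic.inv_le_norm_natCast hn
  have hlogp : 0 < Real.log p := Real.log_pos (mod_cast hp.out.one_lt)
  have hπ_eq : ‖π‖ = Real.exp (-(Real.log p / e)) := by
    rw [hπ, Real.rpow_def_of_pos (mod_cast hp.out.pos)]
    ring_nf
  have hbound : (e : ℝ) / (Real.exp 1 * Real.log p) = 1 / (Real.exp 1 * (Real.log p / e)) := by
    field_simp
  simpa only [Set.mem_ofPred_eq, hbound] using
    norm_padicLogOneAdd_le hK (by positivity) (hπ_eq ▸ hmax a ha)

/-- Let `K` be a finite extension of `ℚ_p` with ramification index `e = e(K/ℚ_p)`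
(encoded by a uniformizer `π` with `‖π‖ = p^{-1/e}` of maximal norm among the elements
of the maximal ideal).  Then `log(O_K^×) ⊆ {x ∈ K : |x|_p ≤ e/(exp(1)·ln p)}`.
Since the extended logarithm kills Teichmüller representatives,
`log(O_K^×) = log(1 + m_K)`, i.e. the image of `a ↦ log(1+a)` for `‖a‖ < 1`. -/
theorem padic_log_units_in_disc (p : ℕ) [hp : Fact p.Prime]
    (K : Type*) [NontriviallyNormedField K] [CompleteSpace K] [IsUltrametricDist K]
    [Algebra ℚ_[p] K] [FiniteDimensional ℚ_[p] K]
    (hnorm : ∀ x : ℚ_[p], ‖algebraMap ℚ_[p] K x‖ = ‖x‖)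
    (e : ℕ) (he : 0 < e) (π : K)
    (hπ : ‖π‖ = (p : ℝ) ^ (-(1 / (e : ℝ))))
    (hmax : ∀ x : K, ‖x‖ < 1 → ‖x‖ ≤ ‖π‖) :
    (fun a => padicLogOneAdd a) '' {a : K | ‖a‖ < 1}
      ⊆ {x : K | ‖x‖ ≤ (e : ℝ) / (Real.exp 1 * Real.log p)} :=
  padic_log_units_in_disc_general p (hp := hp) K hnorm e he π hπ hmax
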